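/- arXiv:1407.7916 — 3 statements merged into one kernel-verified Lean document; each statement's English description precedes it below -/
import Mathlib

section
/- A partition μ having exactly ℓ removable corners has exactly ℓ+1 addable corners, and if R_1,…,R_ℓ are the weights of its removable corners and A_0,…,A_ℓ the weights of its addable corners, then in ℚ(q,t) one has (1−t)(1−q)·B_μ = 1 + qt·(R_1+⋯+R_ℓ) − (A_0+⋯+A_ℓ). -/
open scoped Classical
open PowerSeries

noncomputable section

abbrev K := FractionRing (MvPolynomial (Fin 2) ℚ)

def q : K := algebraMap (MvPolynomial (Fin 2) ℚ) K (MvPolynomial.X 0)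
def t : K := algebraMap (MvPolynomial (Fin 2) ℚ) K (MvPolynomial.X 1)

/-- the weight of a cell `(i,j)` (row `i`, column `j`) is `t^i * q^j` -/
def w (c : ℕ × ℕ) : K := t ^ c.1 * q ^ c.2

/-- `B_μ = Σ_{c ∈ μ} w(c)` -/
def Bsum (μ : YoungDiagram) : K := ∑ c ∈ μ.cells, w c

/-- a removable corner: a cell of `μ` whose removal leaves a Young diagram -/
def IsRemovable (μ : YoungDiagram) (c : ℕ × ℕ) : Prop :=
  c ∈ μ ∧ IsLowerSet (↑(μ.cells.erase c) : Set (ℕ × ℕ))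

/-- an addable corner: a cell not in `μ` whose addition gives a Young diagram -/
def IsAddable (μ : YoungDiagram) (c : ℕ × ℕ) : Prop :=
  c ∉ μ ∧ IsLowerSet (↑(insert c μ.cells) : Set (ℕ × ℕ))

/-- the arm of a cell: number of cells of `μ` strictly east of it in its row -/
def arm (μ : YoungDiagram) (c : ℕ × ℕ) : ℕ :=
  (μ.cells.filter fun d => d.1 = c.1 ∧ c.2 < d.2).card

/-- the leg of a cell: number of cells of `μ` strictly north of it in its column -/
def leg (μ : YoungDiagram) (c : ℕ × ℕ) : ℕ :=
  (μ.cells.filter fun d => d.2 = c.2 ∧ c.1 < d.1).card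


/-! Write `λᵢ` for the row lengths. The removable corners are the cells `(i, λᵢ - 1)` with
`λᵢ₊₁ < λᵢ`, and the addable corners are `(0, λ₀)` together with `(i + 1, λᵢ₊₁)` for the same
rows `i`; this gives the count. Summing `B_μ` row by row, `(1 - q) B_μ = ∑ᵢ tⁱ (1 - q^λᵢ)`, and
Abel summation in `i` gives
`(1 - t)(1 - q) B_μ = 1 - q^λ₀ - ∑ᵢ tⁱ⁺¹ (q^λᵢ₊₁ - q^λᵢ)`.
The summand vanishes unless `λᵢ₊₁ < λᵢ`, and then it is the weight of the addable corner
`(i + 1, λᵢ₊₁)` minus `qt` times that of the removable corner `(i, λᵢ - 1)`. -/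

theorem IsLowerSet.isLowerSet_diff_singleton_iff {α : Type*} [LE α] {s : Set α} {a : α}
    (hs : IsLowerSet s) : IsLowerSet (s \ {a}) ↔ ∀ b ∈ s, a ≤ b → b = a := by
  refine ⟨fun h b hb hab => by_contra fun hba => ?_, hs.erase⟩
  exact (h hab ⟨hb, hba⟩).2 rfl

theorem IsLowerSet.isLowerSet_insert_iff {α : Type*} [LE α] {s : Set α} {a : α}
    (hs : IsLowerSet s) : IsLowerSet (insert a s) ↔ ∀ b ≤ a, b ≠ a → b ∈ s := by
  refine ⟨fun h b hba hne => (h hba (Set.mem_insert a s)).resolve_left hne, fun h b c hcb hb => ?_⟩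
  rcases hb with rfl | hb
  · exact (eq_or_ne c b).elim .inl fun hne => .inr (h c hcb hne)
  · exact .inr (hs hcb hb)

theorem one_sub_mul_one_sub_mul_sum_pow_mul_geom_sum {R : Type*} [CommRing R] (x y : R)
    (l : ℕ → ℕ) (n : ℕ) :
    (1 - x) * (1 - y) * ∑ k ∈ Finset.range n, x ^ k * ∑ j ∈ Finset.range (l k), y ^ j =
      1 - x ^ n * (1 - y ^ l n) -
        (y ^ l 0 + ∑ k ∈ Finset.range n, x ^ (k + 1) * (y ^ l (k + 1) - y ^ l k)) := by
  induction n with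
  | zero => simp
  | succ n ih =>
    rw [Finset.sum_range_succ, Finset.sum_range_succ, mul_add, ih]
    linear_combination (1 - x) * x ^ n * mul_neg_geom_sum y (l n)

namespace YoungDiagram

variable (μ : YoungDiagram)

theorem mem_iff_lt_colLen_zero_and_lt_rowLen {i j : ℕ} :
    (i, j) ∈ μ ↔ i < μ.colLen 0 ∧ j < μ.rowLen i :=
  ⟨fun h => ⟨mem_iff_lt_colLen.1 (μ.up_left_mem le_rfl (Nat.zero_le j) h), mem_iff_lt_rowLen.1 h⟩,
    fun h => mem_iff_lt_rowLen.2 h.2⟩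

theorem rowLen_colLen_zero : μ.rowLen (μ.colLen 0) = 0 :=
  Nat.eq_zero_of_not_pos fun h => (mem_iff_lt_colLen.1 (mem_iff_lt_rowLen.2 h)).false

theorem isRemovable_iff {i j : ℕ} :
    IsRemovable μ (i, j) ↔ j + 1 = μ.rowLen i ∧ μ.rowLen (i + 1) ≤ j := by
  rw [IsRemovable, Finset.coe_erase, μ.isLowerSet.isLowerSet_diff_singleton_iff]
  simp only [Finset.mem_coe, mem_cells]
  constructor
  · rintro ⟨hij, hmax⟩
    have hright := mt (hmax (i, j + 1)) (by simp)
    have hup := mt (hmax (i + 1, j)) (by simp)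
    simp only [mem_iff_lt_rowLen, not_lt] at hij hright hup
    omega
  · rintro ⟨hrow, hup⟩
    refine ⟨mem_iff_lt_rowLen.2 (by omega), ?_⟩
    rintro ⟨a, b⟩ hab hle
    obtain ⟨hia, hjb⟩ : i ≤ a ∧ j ≤ b := hle
    rw [mem_iff_lt_rowLen] at hab
    obtain rfl | hlt := hia.eq_or_lt
    · rw [Prod.mk.injEq]; omega
    · have := μ.rowLen_anti (i + 1) a hlt
      omega

theorem isAddable_iff {i j : ℕ} :
    IsAddable μ (i, j) ↔ j = μ.rowLen i ∧ ∀ k < i, μ.rowLen i < μ.rowLen k := by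
  rw [IsAddable, Finset.coe_insert, μ.isLowerSet.isLowerSet_insert_iff]
  simp only [Finset.mem_coe, mem_cells]
  constructor
  · rintro ⟨hij, hmin⟩
    rw [mem_iff_lt_rowLen, not_lt] at hij
    refine ⟨?_, fun k hk => ?_⟩
    · rcases j with _ | j
      · omega
      · have := mem_iff_lt_rowLen.1 (hmin (i, j) (by simp) (by simp))
        omega
    · have := mem_iff_lt_rowLen.1 (hmin (k, j) (by simp [hk.le]) (by simp [hk.ne]))
      omega
  · rintro ⟨rfl, hlt⟩
    refine ⟨fun h => (mem_iff_lt_rowLen.1 h).false, ?_⟩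
    rintro ⟨a, b⟩ hle hne
    obtain ⟨hai, hbj⟩ : a ≤ i ∧ b ≤ μ.rowLen i := hle
    rw [mem_iff_lt_rowLen]
    obtain rfl | hlt' := hai.eq_or_lt
    · have : b ≠ μ.rowLen a := fun h => hne (by rw [h])
      omega
    · have := hlt a hlt'
      omega

def removableRows : Finset ℕ :=
  {i ∈ Finset.range (μ.colLen 0) | μ.rowLen (i + 1) < μ.rowLen i}

variable {μ} in
theorem mem_removableRows {i : ℕ} : i ∈ μ.removableRows ↔ μ.rowLen (i + 1) < μ.rowLen i := by
  refine ⟨fun h => (Finset.mem_filter.1 h).2, fun h => Finset.mem_filter.2 ⟨?_, h⟩⟩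
  exact Finset.mem_range.2 (mem_iff_lt_colLen.1 (mem_iff_lt_rowLen.2 (by omega : 0 < μ.rowLen i)))

theorem sum_removableRows_eq_sum_range {M : Type*} [AddCommMonoid M] (f : ℕ → M)
    (hf : ∀ i, μ.rowLen (i + 1) = μ.rowLen i → f i = 0) :
    ∑ i ∈ μ.removableRows, f i = ∑ i ∈ Finset.range (μ.colLen 0), f i :=
  Finset.sum_filter_of_ne fun i _ hi =>
    (μ.rowLen_anti i (i + 1) i.le_succ).lt_of_ne fun h => hi (hf i h)

def removableCorners : Finset (ℕ × ℕ) :=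
  μ.removableRows.image fun i => (i, μ.rowLen i - 1)

def addableCorners : Finset (ℕ × ℕ) :=
  insert (0, μ.rowLen 0) (μ.removableRows.image fun i => (i + 1, μ.rowLen (i + 1)))

variable {μ} in
theorem mem_removableCorners {c : ℕ × ℕ} : c ∈ μ.removableCorners ↔ IsRemovable μ c := by
  obtain ⟨i, j⟩ := c
  simp only [removableCorners, Finset.mem_image, mem_removableRows, Prod.mk.injEq, isRemovable_iff]
  constructor
  · rintro ⟨k, hk, rfl, rfl⟩
    omega
  · rintro ⟨hrow, hup⟩
    exact ⟨i, by omega, rfl, by omega⟩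

variable {μ} in
theorem mem_addableCorners {c : ℕ × ℕ} : c ∈ μ.addableCorners ↔ IsAddable μ c := by
  obtain ⟨_ | i, j⟩ := c
  · simp [addableCorners, isAddable_iff]
  · simp only [addableCorners, Finset.mem_insert, Finset.mem_image, mem_removableRows,
      Prod.mk.injEq, isAddable_iff, Nat.add_eq_zero_iff, one_ne_zero, and_false, false_and,
      false_or, add_left_inj]
    constructor
    · rintro ⟨i, hlt, rfl, rfl⟩
      exact ⟨rfl, fun k hk => hlt.trans_le (μ.rowLen_anti k i (by omega))⟩
    · rintro ⟨rfl, hlt⟩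
      exact ⟨i, hlt i i.lt_succ_self, rfl, rfl⟩

theorem card_removableCorners : μ.removableCorners.card = μ.removableRows.card :=
  Finset.card_image_of_injOn fun _ _ _ _ h => congrArg Prod.fst h

theorem card_addableCorners : μ.addableCorners.card = μ.removableRows.card + 1 := by
  rw [addableCorners, Finset.card_insert_of_notMem (by simp),
    Finset.card_image_of_injOn fun _ _ _ _ h => Nat.succ_injective (congrArg Prod.fst h)]

theorem bsum_eq_sum_rowLen :
    Bsum μ = ∑ i ∈ Finset.range (μ.colLen 0), t ^ i * ∑ j ∈ Finset.range (μ.rowLen i), q ^ j := by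
  rw [Bsum, Finset.sum_finset_product μ.cells (Finset.range (μ.colLen 0))
    (fun i => Finset.range (μ.rowLen i)) fun ⟨i, j⟩ => by
      simpa using μ.mem_iff_lt_colLen_zero_and_lt_rowLen]
  simp [w, Finset.mul_sum]

theorem mul_sum_removableCorners :
    q * t * ∑ c ∈ μ.removableCorners, w c =
      ∑ i ∈ μ.removableRows, t ^ (i + 1) * q ^ μ.rowLen i := by
  rw [removableCorners, Finset.sum_image fun _ _ _ _ h => congrArg Prod.fst h, Finset.mul_sum]
  refine Finset.sum_congr rfl fun i hi => ?_
  obtain ⟨m, hm⟩ : ∃ m, μ.rowLen i = m + 1 :=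
    Nat.exists_eq_add_one_of_ne_zero (by have := mem_removableRows.1 hi; omega)
  simp only [w, hm, Nat.add_sub_cancel]
  ring

theorem sum_addableCorners :
    ∑ c ∈ μ.addableCorners, w c =
      q ^ μ.rowLen 0 + ∑ i ∈ μ.removableRows, t ^ (i + 1) * q ^ μ.rowLen (i + 1) := by
  rw [addableCorners, Finset.sum_insert (by simp),
    Finset.sum_image fun _ _ _ _ h => Nat.succ_injective (congrArg Prod.fst h)]
  simp [w]

theorem sum_addableCorners_sub_mul_sum_removableCorners :
    ∑ c ∈ μ.addableCorners, w c - q * t * ∑ c ∈ μ.removableCorners, w c =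
      q ^ μ.rowLen 0 + ∑ i ∈ Finset.range (μ.colLen 0),
        t ^ (i + 1) * (q ^ μ.rowLen (i + 1) - q ^ μ.rowLen i) := by
  rw [sum_addableCorners, mul_sum_removableCorners, add_sub_assoc, ← Finset.sum_sub_distrib,
    ← μ.sum_removableRows_eq_sum_range _ fun i h => by rw [h, sub_self, mul_zero]]
  simp only [mul_sub]

end YoungDiagram

/-- a partition with exactly `ℓ` removable corners has exactly `ℓ+1`
addable corners, and `(1-t)(1-q)·B_μ = 1 + qt·(ΣR) − (ΣA)`. -/
theorem stmt_1 (μ : YoungDiagram) (ℓ : ℕ) (Rem Add : Finset (ℕ × ℕ))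
    (hRem : ∀ c, c ∈ Rem ↔ IsRemovable μ c)
    (hAdd : ∀ c, c ∈ Add ↔ IsAddable μ c)
    (hℓ : Rem.card = ℓ) :
    Add.card = ℓ + 1 ∧
    (1 - t) * (1 - q) * Bsum μ =
      1 + q * t * (∑ r ∈ Rem, w r) - ∑ a ∈ Add, w a := by
  obtain rfl : Rem = μ.removableCorners :=
    Finset.ext fun c => (hRem c).trans YoungDiagram.mem_removableCorners.symm
  obtain rfl : Add = μ.addableCorners :=
    Finset.ext fun c => (hAdd c).trans YoungDiagram.mem_addableCorners.symm
  refine ⟨by rw [μ.card_addableCorners, ← μ.card_removableCorners, hℓ], ?_⟩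
  have htelescope := one_sub_mul_one_sub_mul_sum_pow_mul_geom_sum t q μ.rowLen (μ.colLen 0)
  rw [μ.rowLen_colLen_zero, pow_zero, sub_self, mul_zero, sub_zero] at htelescope
  rw [μ.bsum_eq_sum_rowLen, htelescope,
    ← μ.sum_addableCorners_sub_mul_sum_removableCorners]
  ring

end
end

section
/- Let ν be a partition with ℓ removable corners, of weights R_1,…,R_ℓ, and ℓ+1 addable corners. Fix an addable corner of ν of weight A and let μ = ν together with that cell. Then in ℚ(q,t): ∏_{s∈R_{μν}} (q^{a_ν(s)}−t^{l_ν(s)+1})/(q^{a_μ(s)}−t^{l_μ(s)+1}) · ∏_{s∈C_{μν}} (t^{l_ν(s)}−q^{a_ν(s)+1})/(t^{l_μ(s)}−q^{a_μ(s)+1}) = (1/A)·∏_{i=1}^{ℓ}(1 − qt·R_i/A) / ∏_{A'≠A}(1 − A'/A), where the last product runs over the weights A' of the addable corners of ν other than the chosen one. (Equality of Macdonald's row–column product formula for the e_1-Pieri coefficient d_{μν} with its corner-weight formula.) -/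
open scoped Classical
open PowerSeries

noncomputable section

/-!
Put `A = w c` with `c = (R, C)`. For the cell `(R, j)` of the row of `c`, with `x_j = w (colLen j, j)`
the weight of the cell just above column `j`, Macdonald's factor equals
`q⁻¹ (1 - q x_j / A) / (1 - x_j / A)`. Along a run of columns of equal height `q x_j = x_{j+1}`,
so the row product telescopes: numerators survive where the column height drops (there
`q x_j = q t w r` for the removable corner `r` on top of column `j`), denominators where a run
starts (the addable corner `(colLen j, j)`). The column of `c` behaves the same way with rows and
`t` in place of `q`. Corners strictly left of `c` and strictly below `c` together exhaust the
removable corners and the addable ones other than `c`, and the leftover `q⁻¹ ^ C * t⁻¹ ^ R` is `A⁻¹`.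
-/

open Finset MvPolynomial

theorem w_eq_algebraMap_monomial (c : ℕ × ℕ) :
    w c = algebraMap (MvPolynomial (Fin 2) ℚ) K
      (monomial (Finsupp.single 1 c.1 + Finsupp.single 0 c.2) 1) := by
  simp only [w, t, q, ← map_pow, ← map_mul, X_pow_eq_monomial, monomial_mul, mul_one]

theorem w_injective : Function.Injective w := by
  intro x y hxy
  rw [w_eq_algebraMap_monomial, w_eq_algebraMap_monomial] at hxy
  have h := monomial_left_injective one_ne_zero (IsFractionRing.injective _ K hxy)
  exact Prod.ext (by simpa using DFunLike.congr_fun h 1) (by simpa using DFunLike.congr_fun h 0)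

theorem w_ne_zero (c : ℕ × ℕ) : w c ≠ 0 := by
  rw [w_eq_algebraMap_monomial]
  exact (map_ne_zero_iff _ (IsFractionRing.injective _ K)).mpr (monomial_eq_zero.not.mpr one_ne_zero)

theorem q_ne_zero : q ≠ 0 := by simpa [w] using w_ne_zero (0, 1)

theorem t_ne_zero : t ≠ 0 := by simpa [w] using w_ne_zero (1, 0)

theorem one_sub_w_div_ne_zero {x c : ℕ × ℕ} (h : x ≠ c) : 1 - w x / w c ≠ 0 := by
  rw [sub_ne_zero, ne_comm, Ne, div_eq_one_iff_eq (w_ne_zero c)]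
  exact w_injective.ne h

theorem prod_range_div_eq_of_runs {F : Type*} [Field F] (a b : ℕ → F) (P : ℕ → Prop)
    [DecidablePred P] (n : ℕ) (hrun : ∀ j < n, ¬ P j → a j = b (j + 1))
    (hlast : 0 < n → P (n - 1)) (hb : ∀ j < n, b j ≠ 0) :
    ∏ j ∈ range n, a j / b j =
      (∏ j ∈ (range n).filter P, a j) / ∏ j ∈ (range n).filter (fun j => j = 0 ∨ P (j - 1)), b j := by
  have hnext : ∀ j ∈ (range n).filter (¬ P ·), j + 1 < n := by
    intro j hj
    simp only [mem_filter, mem_range] at hj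
    by_contra h
    exact hj.2 (by simpa [show j = n - 1 by omega] using hlast (by omega))
  set X := ∏ j ∈ (range n).filter (¬ P ·), b (j + 1)
  have hX : X ≠ 0 := prod_ne_zero_iff.mpr fun j hj => hb _ (hnext j hj)
  have hnum : ∏ j ∈ range n, a j = (∏ j ∈ (range n).filter P, a j) * X := by
    rw [← prod_filter_mul_prod_filter_not (range n) P]
    congr 1
    exact prod_congr rfl fun j hj => by
      simp only [mem_filter, mem_range] at hj
      exact hrun j hj.1 hj.2
  have hden : ∏ j ∈ range n, b j =
      (∏ j ∈ (range n).filter (fun j => j = 0 ∨ P (j - 1)), b j) * X := by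
    rw [← prod_filter_mul_prod_filter_not (range n) (fun j => j = 0 ∨ P (j - 1))]
    congr 1
    refine (prod_nbij' (· + 1) (· - 1) ?_ ?_ ?_ ?_ ?_).symm
    · intro j hj
      have := hnext j hj
      simp only [mem_filter, mem_range] at hj ⊢
      simpa [this] using hj.2
    · intro j hj
      simp only [mem_filter, mem_range, not_or] at hj ⊢
      exact ⟨by omega, hj.2.2⟩
    · simp
    · intro j hj
      simp only [mem_filter, mem_range, not_or] at hj
      omega
    · exact fun _ _ => rfl
  rw [prod_div_distrib, hnum, hden, mul_div_mul_right _ _ hX]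

theorem isRemovable_iff (ν : YoungDiagram) (x : ℕ × ℕ) :
    IsRemovable ν x ↔ x ∈ ν ∧ (x.1 + 1, x.2) ∉ ν ∧ (x.1, x.2 + 1) ∉ ν := by
  constructor
  · rintro ⟨hx, hlow⟩
    have top : ∀ y ∈ ν, x ≤ y → y = x := fun y hy hxy => by
      by_contra hne
      simpa using hlow hxy (by simpa [hne] using hy)
    refine ⟨hx, fun h => ?_, fun h => ?_⟩
    · simpa [Prod.ext_iff] using top _ h ⟨by simp, le_rfl⟩
    · simpa [Prod.ext_iff] using top _ h ⟨le_rfl, by simp⟩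
  · rintro ⟨hx, hbelow, hright⟩
    refine ⟨hx, fun a b hba ha => ?_⟩
    simp only [coe_erase, Set.mem_sdiff, mem_coe, YoungDiagram.mem_cells,
      Set.mem_singleton_iff] at ha ⊢
    refine ⟨ν.isLowerSet hba ha.1, ?_⟩
    rintro rfl
    rcases lt_or_eq_of_le hba.1 with h1 | h1
    · exact hbelow (ν.up_left_mem h1 hba.2 ha.1)
    rcases lt_or_eq_of_le hba.2 with h2 | h2
    · exact hright (ν.up_left_mem hba.1 h2 ha.1)
    · exact ha.2 (Prod.ext h1.symm h2.symm)

theorem isAddable_iff (ν : YoungDiagram) (x : ℕ × ℕ) :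
    IsAddable ν x ↔ x ∉ ν ∧ (x.1 = 0 ∨ (x.1 - 1, x.2) ∈ ν) ∧ (x.2 = 0 ∨ (x.1, x.2 - 1) ∈ ν) := by
  constructor
  · rintro ⟨hx, hlow⟩
    have below : ∀ y ≤ x, y ≠ x → y ∈ ν := fun y hyx hne => by
      simpa [hne] using hlow hyx (by simp : x ∈ (↑(insert x ν.cells) : Set (ℕ × ℕ)))
    refine ⟨hx, ?_, ?_⟩
    · rcases Nat.eq_zero_or_pos x.1 with h | h
      · exact .inl h
      · exact .inr (below _ ⟨by simp, le_rfl⟩ (by simp [Prod.ext_iff]; omega))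
    · rcases Nat.eq_zero_or_pos x.2 with h | h
      · exact .inl h
      · exact .inr (below _ ⟨le_rfl, by simp⟩ (by simp [Prod.ext_iff]; omega))
  · rintro ⟨hx, habove, hleft⟩
    refine ⟨hx, fun a b hba ha => ?_⟩
    simp only [coe_insert, Set.mem_insert_iff, mem_coe, YoungDiagram.mem_cells] at ha ⊢
    rcases ha with rfl | ha
    · rcases eq_or_ne b a with h | hne
      · exact .inl h
      rcases lt_or_eq_of_le hba.1 with h1 | h1
      · rcases habove with h | h
        · omega
        · exact .inr (ν.up_left_mem (by omega) hba.2 h)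
      rcases lt_or_eq_of_le hba.2 with h2 | h2
      · rcases hleft with h | h
        · omega
        · exact .inr (ν.up_left_mem hba.1 (by omega) h)
      · exact absurd (Prod.ext h1 h2) hne
    · exact .inr (ν.isLowerSet hba ha)

theorem isRemovable_iff_colLen {ν : YoungDiagram} {i j : ℕ} :
    IsRemovable ν (i, j) ↔ ν.colLen j = i + 1 ∧ ν.colLen (j + 1) < ν.colLen j := by
  simp only [isRemovable_iff, YoungDiagram.mem_iff_lt_colLen]
  omega

theorem isRemovable_iff_rowLen {ν : YoungDiagram} {i j : ℕ} :
    IsRemovable ν (i, j) ↔ ν.rowLen i = j + 1 ∧ ν.rowLen (i + 1) < ν.rowLen i := by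
  simp only [isRemovable_iff, YoungDiagram.mem_iff_lt_rowLen]
  omega

theorem isAddable_iff_colLen {ν : YoungDiagram} {i j : ℕ} :
    IsAddable ν (i, j) ↔ ν.colLen j = i ∧ (j = 0 ∨ ν.colLen j < ν.colLen (j - 1)) := by
  simp only [isAddable_iff, YoungDiagram.mem_iff_lt_colLen]
  omega

theorem isAddable_iff_rowLen {ν : YoungDiagram} {i j : ℕ} :
    IsAddable ν (i, j) ↔ ν.rowLen i = j ∧ (i = 0 ∨ ν.rowLen i < ν.rowLen (i - 1)) := by
  simp only [isAddable_iff, YoungDiagram.mem_iff_lt_rowLen]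
  omega

theorem arm_mk (ν : YoungDiagram) (i j : ℕ) : arm ν (i, j) = ν.rowLen i - (j + 1) := by
  have : ν.cells.filter (fun d => d.1 = i ∧ j < d.2) =
      (Ioo j (ν.rowLen i)).map ⟨(i, ·), Prod.mk_right_injective i⟩ := by
    ext ⟨a, b⟩
    simp only [mem_filter, YoungDiagram.mem_cells, YoungDiagram.mem_iff_lt_rowLen, mem_map,
      mem_Ioo, Function.Embedding.coeFn_mk, Prod.mk.injEq]
    constructor
    · rintro ⟨hb, rfl, hjb⟩
      exact ⟨b, ⟨hjb, hb⟩, rfl, rfl⟩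
    · rintro ⟨k, ⟨hjk, hk⟩, rfl, rfl⟩
      exact ⟨hk, rfl, hjk⟩
  rw [arm, this, card_map, Nat.card_Ioo]
  omega

theorem leg_mk (ν : YoungDiagram) (i j : ℕ) : leg ν (i, j) = ν.colLen j - (i + 1) := by
  have : ν.cells.filter (fun d => d.2 = j ∧ i < d.1) =
      (Ioo i (ν.colLen j)).map ⟨(·, j), Prod.mk_left_injective j⟩ := by
    ext ⟨a, b⟩
    simp only [mem_filter, YoungDiagram.mem_cells, YoungDiagram.mem_iff_lt_colLen, mem_map,
      mem_Ioo, Function.Embedding.coeFn_mk, Prod.mk.injEq]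
    constructor
    · rintro ⟨ha, rfl, hia⟩
      exact ⟨a, ⟨hia, ha⟩, rfl, rfl⟩
    · rintro ⟨k, ⟨hik, hk⟩, rfl, rfl⟩
      exact ⟨hk, rfl, hik⟩
  rw [leg, this, card_map, Nat.card_Ioo]
  omega

section InsertCell

variable {μ ν : YoungDiagram} {c : ℕ × ℕ}

theorem arm_of_cells_eq_insert (hc : c ∉ ν) (hμ : μ.cells = insert c ν.cells) (s : ℕ × ℕ) :
    arm μ s = arm ν s + if c.1 = s.1 ∧ s.2 < c.2 then 1 else 0 := by
  simp only [arm, hμ, filter_insert]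
  split_ifs
  · exact card_insert_of_notMem fun h => hc (mem_filter.mp h).1
  · rfl

theorem leg_of_cells_eq_insert (hc : c ∉ ν) (hμ : μ.cells = insert c ν.cells) (s : ℕ × ℕ) :
    leg μ s = leg ν s + if c.2 = s.2 ∧ s.1 < c.1 then 1 else 0 := by
  simp only [leg, hμ, filter_insert]
  split_ifs
  · exact card_insert_of_notMem fun h => hc (mem_filter.mp h).1
  · rfl

end InsertCell

theorem pow_sub_div_pow_succ_sub {F : Type*} [Field F] {u : F} (hu : u ≠ 0) (m : ℕ) (z : F) :
    (u ^ m - u ^ (m + 1) * z) / (u ^ (m + 1) - u ^ (m + 1) * z) = u⁻¹ * ((1 - u * z) / (1 - z)) := by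
  rw [show u ^ m - u ^ (m + 1) * z = u ^ m * (1 - u * z) by ring,
    show u ^ (m + 1) - u ^ (m + 1) * z = u ^ m * (u * (1 - z)) by ring,
    mul_div_mul_left _ _ (pow_ne_zero m hu), div_mul_eq_div_div_swap, div_eq_inv_mul]

theorem row_cell_ratio {R C L j : ℕ} (hj : j < C) (hL : R < L) :
    (q ^ (C - (j + 1)) - t ^ (L - (R + 1) + 1)) / (q ^ (C - (j + 1) + 1) - t ^ (L - (R + 1) + 1)) =
      q⁻¹ * ((1 - q * t * w (L - 1, j) / w (R, C)) / (1 - w (L, j) / w (R, C))) := by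
  obtain ⟨a, rfl⟩ : ∃ a, L = R + 1 + a := ⟨L - (R + 1), by omega⟩
  obtain ⟨b, rfl⟩ : ∃ b, C = j + 1 + b := ⟨C - (j + 1), by omega⟩
  have ht : t ^ (a + 1) = q ^ (b + 1) * (w (R + 1 + a, j) / w (R, j + 1 + b)) := by
    simp only [w]; field_simp [q_ne_zero, t_ne_zero]; ring
  have hnum : q * t * w (R + 1 + a - 1, j) / w (R, j + 1 + b) =
      q * (w (R + 1 + a, j) / w (R, j + 1 + b)) := by
    simp only [w, show R + 1 + a - 1 = R + a by omega]; ring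
  simp only [show R + 1 + a - (R + 1) = a by omega, show j + 1 + b - (j + 1) = b by omega]
  rw [ht, hnum, pow_sub_div_pow_succ_sub q_ne_zero]

theorem col_cell_ratio {R C M i : ℕ} (hi : i < R) (hM : C < M) :
    (t ^ (R - (i + 1)) - q ^ (M - (C + 1) + 1)) / (t ^ (R - (i + 1) + 1) - q ^ (M - (C + 1) + 1)) =
      t⁻¹ * ((1 - q * t * w (i, M - 1) / w (R, C)) / (1 - w (i, M) / w (R, C))) := by
  obtain ⟨a, rfl⟩ : ∃ a, M = C + 1 + a := ⟨M - (C + 1), by omega⟩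
  obtain ⟨b, rfl⟩ : ∃ b, R = i + 1 + b := ⟨R - (i + 1), by omega⟩
  have hq : q ^ (a + 1) = t ^ (b + 1) * (w (i, C + 1 + a) / w (i + 1 + b, C)) := by
    simp only [w]; field_simp [q_ne_zero, t_ne_zero]; ring
  have hnum : q * t * w (i, C + 1 + a - 1) / w (i + 1 + b, C) =
      t * (w (i, C + 1 + a) / w (i + 1 + b, C)) := by
    simp only [w, show C + 1 + a - 1 = C + a by omega]; ring
  simp only [show C + 1 + a - (C + 1) = a by omega, show i + 1 + b - (i + 1) = b by omega]
  rw [hq, hnum, pow_sub_div_pow_succ_sub t_ne_zero]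

section AddableCorner

variable {ν : YoungDiagram} {R C : ℕ}

theorem IsAddable.rowLen_eq (hc : IsAddable ν (R, C)) : ν.rowLen R = C :=
  (isAddable_iff_rowLen.mp hc).1

theorem IsAddable.colLen_eq (hc : IsAddable ν (R, C)) : ν.colLen C = R :=
  (isAddable_iff_colLen.mp hc).1

theorem IsAddable.lt_colLen_iff (hc : IsAddable ν (R, C)) (j : ℕ) : R < ν.colLen j ↔ j < C := by
  rw [← YoungDiagram.mem_iff_lt_colLen, YoungDiagram.mem_iff_lt_rowLen, hc.rowLen_eq]

theorem IsAddable.lt_rowLen_iff (hc : IsAddable ν (R, C)) (i : ℕ) : C < ν.rowLen i ↔ i < R := by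
  rw [← YoungDiagram.mem_iff_lt_rowLen, YoungDiagram.mem_iff_lt_colLen, hc.colLen_eq]

variable {μ : YoungDiagram}

theorem prod_row_ratio_eq (hc : IsAddable ν (R, C)) (hμ : μ.cells = insert (R, C) ν.cells) :
    ∏ s ∈ ν.cells.filter (fun s => s.1 = R),
        (q ^ arm ν s - t ^ (leg ν s + 1)) / (q ^ arm μ s - t ^ (leg μ s + 1)) =
      q⁻¹ ^ C * ((∏ j ∈ (range C).filter (fun j => ν.colLen (j + 1) < ν.colLen j),
          (1 - q * t * w (ν.colLen j - 1, j) / w (R, C))) /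
        ∏ j ∈ (range C).filter (fun j => j = 0 ∨ ν.colLen j < ν.colLen (j - 1)),
          (1 - w (ν.colLen j, j) / w (R, C))) := by
  have hrow : ν.cells.filter (fun s => s.1 = R) = {R} ×ˢ range C := by
    rw [← hc.rowLen_eq, ← YoungDiagram.row_eq_prod]; rfl
  calc _ = ∏ j ∈ range C, q⁻¹ * ((1 - q * t * w (ν.colLen j - 1, j) / w (R, C)) /
          (1 - w (ν.colLen j, j) / w (R, C))) := by
        rw [hrow, prod_product, prod_singleton]
        refine prod_congr rfl fun j hj => ?_
        have hj : j < C := mem_range.mp hj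
        rw [arm_of_cells_eq_insert hc.1 hμ, leg_of_cells_eq_insert hc.1 hμ, if_pos ⟨rfl, hj⟩,
          if_neg (by simp), add_zero, arm_mk, leg_mk, hc.rowLen_eq]
        exact row_cell_ratio hj ((hc.lt_colLen_iff j).mpr hj)
    _ = _ := by
      rw [prod_mul_distrib, prod_const, card_range, prod_range_div_eq_of_runs _ _ (fun j => ν.colLen (j + 1) < ν.colLen j)]
      · congr 3
        exact filter_congr fun j _ => by rcases j with _ | j <;> simp
      · intro j hj hflat
        have hL : ν.colLen (j + 1) = ν.colLen j :=
          le_antisymm (ν.colLen_anti _ _ j.le_succ) (not_lt.mp hflat)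
        have hpos : 0 < ν.colLen j := by have := (hc.lt_colLen_iff j).mpr hj; omega
        obtain ⟨L, hL'⟩ : ∃ L, ν.colLen j = L + 1 := ⟨_, (Nat.succ_pred_eq_of_pos hpos).symm⟩
        rw [hL, hL']
        simp only [w, Nat.add_sub_cancel]; ring
      · intro hC
        rw [Nat.sub_add_cancel hC, hc.colLen_eq]
        exact (hc.lt_colLen_iff _).mpr (by omega)
      · intro j hj
        exact one_sub_w_div_ne_zero (by simp; omega)

theorem prod_col_ratio_eq (hc : IsAddable ν (R, C)) (hμ : μ.cells = insert (R, C) ν.cells) :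
    ∏ s ∈ ν.cells.filter (fun s => s.2 = C),
        (t ^ leg ν s - q ^ (arm ν s + 1)) / (t ^ leg μ s - q ^ (arm μ s + 1)) =
      t⁻¹ ^ R * ((∏ i ∈ (range R).filter (fun i => ν.rowLen (i + 1) < ν.rowLen i),
          (1 - q * t * w (i, ν.rowLen i - 1) / w (R, C))) /
        ∏ i ∈ (range R).filter (fun i => i = 0 ∨ ν.rowLen i < ν.rowLen (i - 1)),
          (1 - w (i, ν.rowLen i) / w (R, C))) := by
  have hcol : ν.cells.filter (fun s => s.2 = C) = range R ×ˢ {C} := by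
    rw [← hc.colLen_eq, ← YoungDiagram.col_eq_prod]; rfl
  calc _ = ∏ i ∈ range R, t⁻¹ * ((1 - q * t * w (i, ν.rowLen i - 1) / w (R, C)) /
          (1 - w (i, ν.rowLen i) / w (R, C))) := by
        rw [hcol, prod_product_right, prod_singleton]
        refine prod_congr rfl fun i hi => ?_
        have hi : i < R := mem_range.mp hi
        rw [arm_of_cells_eq_insert hc.1 hμ, leg_of_cells_eq_insert hc.1 hμ, if_pos ⟨rfl, hi⟩,
          if_neg (by simp), add_zero, arm_mk, leg_mk, hc.colLen_eq]
        exact col_cell_ratio hi ((hc.lt_rowLen_iff i).mpr hi)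
    _ = _ := by
      rw [prod_mul_distrib, prod_const, card_range, prod_range_div_eq_of_runs _ _ (fun i => ν.rowLen (i + 1) < ν.rowLen i)]
      · congr 3
        exact filter_congr fun i _ => by rcases i with _ | i <;> simp
      · intro i hi hflat
        have hM : ν.rowLen (i + 1) = ν.rowLen i :=
          le_antisymm (ν.rowLen_anti _ _ i.le_succ) (not_lt.mp hflat)
        have hpos : 0 < ν.rowLen i := by have := (hc.lt_rowLen_iff i).mpr hi; omega
        obtain ⟨M, hM'⟩ : ∃ M, ν.rowLen i = M + 1 := ⟨_, (Nat.succ_pred_eq_of_pos hpos).symm⟩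
        rw [hM, hM']
        simp only [w, Nat.add_sub_cancel]; ring
      · intro hR
        rw [Nat.sub_add_cancel hR, hc.rowLen_eq]
        exact (hc.lt_rowLen_iff _).mpr (by omega)
      · intro i hi
        exact one_sub_w_div_ne_zero (by simp; omega)

end AddableCorner

section CornerProducts

variable {M : Type*} [CommMonoid M] {ν : YoungDiagram} {R C : ℕ}

theorem prod_removable (hc : IsAddable ν (R, C)) {Rem : Finset (ℕ × ℕ)}
    (hRem : ∀ x, x ∈ Rem ↔ IsRemovable ν x) (f : ℕ × ℕ → M) :
    ∏ r ∈ Rem, f r =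
      (∏ j ∈ (range C).filter (fun j => ν.colLen (j + 1) < ν.colLen j), f (ν.colLen j - 1, j)) *
        ∏ i ∈ (range R).filter (fun i => ν.rowLen (i + 1) < ν.rowLen i), f (i, ν.rowLen i - 1) := by
  have hleft : Rem.filter (fun x => x.2 < C) =
      ((range C).filter fun j => ν.colLen (j + 1) < ν.colLen j).image
        fun j => (ν.colLen j - 1, j) := by
    ext ⟨i, j⟩
    simp only [mem_filter, hRem, isRemovable_iff_colLen, mem_image, mem_range, Prod.mk.injEq]
    constructor
    · rintro ⟨⟨hi, hdrop⟩, hj⟩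
      exact ⟨j, ⟨hj, hdrop⟩, by omega, rfl⟩
    · rintro ⟨j, ⟨hj, hdrop⟩, rfl, rfl⟩
      exact ⟨⟨by omega, hdrop⟩, hj⟩
  have hbelow : Rem.filter (fun x => ¬ x.2 < C) =
      ((range R).filter fun i => ν.rowLen (i + 1) < ν.rowLen i).image
        fun i => (i, ν.rowLen i - 1) := by
    ext ⟨i, j⟩
    have := hc.lt_rowLen_iff i
    simp only [mem_filter, hRem, isRemovable_iff_rowLen, mem_image, mem_range, Prod.mk.injEq]
    constructor
    · rintro ⟨⟨hj, hdrop⟩, hjC⟩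
      exact ⟨i, ⟨by omega, hdrop⟩, rfl, by omega⟩
    · rintro ⟨i, ⟨hi, hdrop⟩, rfl, rfl⟩
      exact ⟨⟨by omega, hdrop⟩, by omega⟩
  rw [← prod_filter_mul_prod_filter_not Rem (fun x => x.2 < C), hleft, hbelow,
    prod_image fun _ _ _ _ h => (Prod.mk.inj h).2, prod_image fun _ _ _ _ h => (Prod.mk.inj h).1]

theorem prod_addable_erase (hc : IsAddable ν (R, C)) {Add : Finset (ℕ × ℕ)}
    (hAdd : ∀ x, x ∈ Add ↔ IsAddable ν x) (f : ℕ × ℕ → M) :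
    ∏ a ∈ Add.erase (R, C), f a =
      (∏ j ∈ (range C).filter (fun j => j = 0 ∨ ν.colLen j < ν.colLen (j - 1)), f (ν.colLen j, j)) *
        ∏ i ∈ (range R).filter (fun i => i = 0 ∨ ν.rowLen i < ν.rowLen (i - 1)), f (i, ν.rowLen i) := by
  have hleft : (Add.erase (R, C)).filter (fun x => x.2 < C) =
      ((range C).filter fun j => j = 0 ∨ ν.colLen j < ν.colLen (j - 1)).image
        fun j => (ν.colLen j, j) := by
    ext ⟨i, j⟩
    simp only [mem_filter, mem_erase, ne_eq, hAdd, isAddable_iff_colLen, mem_image, mem_range,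
      Prod.mk.injEq]
    constructor
    · rintro ⟨⟨-, hi, hstart⟩, hj⟩
      exact ⟨j, ⟨hj, hstart⟩, hi, rfl⟩
    · rintro ⟨j, ⟨hj, hstart⟩, rfl, rfl⟩
      exact ⟨⟨by omega, rfl, hstart⟩, hj⟩
  have hbelow : (Add.erase (R, C)).filter (fun x => ¬ x.2 < C) =
      ((range R).filter fun i => i = 0 ∨ ν.rowLen i < ν.rowLen (i - 1)).image
        fun i => (i, ν.rowLen i) := by
    ext ⟨i, j⟩
    have := hc.lt_rowLen_iff i
    have := hc.lt_rowLen_iff (i - 1)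
    simp only [mem_filter, mem_erase, ne_eq, hAdd, isAddable_iff_rowLen, mem_image, mem_range,
      Prod.mk.injEq]
    constructor
    · rintro ⟨⟨hne, hj, hstart⟩, hjC⟩
      exact ⟨i, ⟨by omega, hstart⟩, rfl, hj⟩
    · rintro ⟨i, ⟨hi, hstart⟩, rfl, rfl⟩
      exact ⟨⟨by omega, rfl, hstart⟩, by omega⟩
  rw [← prod_filter_mul_prod_filter_not _ (fun x => x.2 < C), hleft, hbelow,
    prod_image fun _ _ _ _ h => (Prod.mk.inj h).2, prod_image fun _ _ _ _ h => (Prod.mk.inj h).1]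

end CornerProducts

theorem stmt_2_general (ν : YoungDiagram) (Rem Add : Finset (ℕ × ℕ))
    (hRem : ∀ x, x ∈ Rem ↔ IsRemovable ν x)
    (hAdd : ∀ x, x ∈ Add ↔ IsAddable ν x)
    (c : ℕ × ℕ) (hc : IsAddable ν c)
    (μ : YoungDiagram) (hμ : μ.cells = insert c ν.cells) :
    (∏ s ∈ ν.cells.filter (fun s => s.1 = c.1),
        (q ^ arm ν s - t ^ (leg ν s + 1)) / (q ^ arm μ s - t ^ (leg μ s + 1))) *
      (∏ s ∈ ν.cells.filter (fun s => s.2 = c.2),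
        (t ^ leg ν s - q ^ (arm ν s + 1)) / (t ^ leg μ s - q ^ (arm μ s + 1))) =
    (w c)⁻¹ * (∏ r ∈ Rem, (1 - q * t * w r / w c)) /
      ∏ a ∈ Add.erase c, (1 - w a / w c) := by
  obtain ⟨R, C⟩ := c
  rw [prod_row_ratio_eq hc hμ, prod_col_ratio_eq hc hμ, prod_removable hc hRem,
    prod_addable_erase hc hAdd, show (w (R, C))⁻¹ = q⁻¹ ^ C * t⁻¹ ^ R by simp [w, mul_comm]]
  ring

/-- equality of Macdonald's row–column product formula for the
`e₁`-Pieri coefficient `d_{μν}` with its corner-weight formula. -/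
theorem stmt_2 (ν : YoungDiagram) (ℓ : ℕ) (Rem Add : Finset (ℕ × ℕ))
    (hRem : ∀ x, x ∈ Rem ↔ IsRemovable ν x)
    (hAdd : ∀ x, x ∈ Add ↔ IsAddable ν x)
    (hℓ : Rem.card = ℓ)
    (c : ℕ × ℕ) (hc : IsAddable ν c)
    (μ : YoungDiagram) (hμ : μ.cells = insert c ν.cells) :
    (∏ s ∈ ν.cells.filter (fun s => s.1 = c.1),
        (q ^ arm ν s - t ^ (leg ν s + 1)) / (q ^ arm μ s - t ^ (leg μ s + 1))) *
      (∏ s ∈ ν.cells.filter (fun s => s.2 = c.2),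
        (t ^ leg ν s - q ^ (arm ν s + 1)) / (t ^ leg μ s - q ^ (arm μ s + 1))) =
    (w c)⁻¹ * (∏ r ∈ Rem, (1 - q * t * w r / w c)) /
      ∏ a ∈ Add.erase c, (1 - w a / w c) :=
  stmt_2_general ν Rem Add hRem hAdd c hc μ hμ

end
end

section
/- Let ν ⊂ μ be partitions differing by a single cell. With d_{μν} = ∏_{s∈R_{μν}} (q^{a_ν(s)}−t^{l_ν(s)+1})/(q^{a_μ(s)}−t^{l_μ(s)+1}) · ∏_{s∈C_{μν}} (t^{l_ν(s)}−q^{a_ν(s)+1})/(t^{l_μ(s)}−q^{a_μ(s)+1}) and c_{μν} = ∏_{s∈R_{μν}} (t^{l_μ(s)}−q^{a_μ(s)+1})/(t^{l_ν(s)}−q^{a_ν(s)+1}) · ∏_{s∈C_{μν}} (q^{a_μ(s)}−t^{l_μ(s)+1})/(q^{a_ν(s)}−t^{l_ν(s)+1}), one has in ℚ(q,t) the relation d_{μν} = M·(w_ν/w_μ)·c_{μν}, where M = (1−t)(1−q) and w_λ = ∏_{c∈λ}(q^{a_λ(c)} − t^{l_λ(c)+1})(t^{l_λ(c)} − q^{a_λ(c)+1}).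 -/
open scoped Classical
open PowerSeries

noncomputable section

/-! The new cell `cel` has arm and leg `0` in `μ`, so it contributes exactly `M` to `w_μ`, and
no hook outside its row and column changes. Hence `w_ν / w_μ` is `M⁻¹` times a product over
`R_{μν} ∪ C_{μν}`, and cell by cell the factors of `w_ν / w_μ` and `c_{μν}` multiply to those
of `d_{μν}`. -/

lemma q_pow_ne_t_pow {a b : ℕ} (h : a ≠ 0 ∨ b ≠ 0) : q ^ a ≠ t ^ b := by
  unfold q t
  rw [← map_pow, ← map_pow, (IsFractionRing.injective (MvPolynomial (Fin 2) ℚ) K).ne_iff,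
    MvPolynomial.X_pow_eq_monomial, MvPolynomial.X_pow_eq_monomial, Ne,
    MvPolynomial.monomial_eq_monomial_iff, Finsupp.single_eq_single_iff]
  simp only [zero_ne_one, one_ne_zero, false_and, and_false, and_true, or_false]
  tauto

def armFactor (μ : YoungDiagram) (s : ℕ × ℕ) : K := q ^ arm μ s - t ^ (leg μ s + 1)

def legFactor (μ : YoungDiagram) (s : ℕ × ℕ) : K := t ^ leg μ s - q ^ (arm μ s + 1)

lemma armFactor_ne_zero (μ : YoungDiagram) (s : ℕ × ℕ) : armFactor μ s ≠ 0 :=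
  sub_ne_zero.mpr (q_pow_ne_t_pow (Or.inr (leg μ s).succ_ne_zero))

lemma legFactor_ne_zero (μ : YoungDiagram) (s : ℕ × ℕ) : legFactor μ s ≠ 0 :=
  sub_ne_zero.mpr (q_pow_ne_t_pow (Or.inl (arm μ s).succ_ne_zero)).symm

section AddCell

variable {ν μ : YoungDiagram} {cel : ℕ × ℕ}

lemma arm_eq_of_ne_row (hμ : μ.cells = insert cel ν.cells) {s : ℕ × ℕ} (hs : s.1 ≠ cel.1) :
    arm μ s = arm ν s := by
  unfold arm
  rw [hμ, Finset.filter_insert, if_neg fun h => hs h.1.symm]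

lemma leg_eq_of_ne_col (hμ : μ.cells = insert cel ν.cells) {s : ℕ × ℕ} (hs : s.2 ≠ cel.2) :
    leg μ s = leg ν s := by
  unfold leg
  rw [hμ, Finset.filter_insert, if_neg fun h => hs h.1.symm]

lemma arm_eq_zero_of_insert (hcel : cel ∉ ν.cells) (hμ : μ.cells = insert cel ν.cells) :
    arm μ cel = 0 := by
  unfold arm
  rw [Finset.card_eq_zero, Finset.filter_eq_empty_iff, hμ]
  rintro d hd ⟨hrow, hlt⟩
  rcases Finset.mem_insert.mp hd with rfl | hd
  · exact lt_irrefl _ hlt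
  · exact hcel (ν.up_left_mem hrow.ge hlt.le hd)

lemma leg_eq_zero_of_insert (hcel : cel ∉ ν.cells) (hμ : μ.cells = insert cel ν.cells) :
    leg μ cel = 0 := by
  unfold leg
  rw [Finset.card_eq_zero, Finset.filter_eq_empty_iff, hμ]
  rintro d hd ⟨hcol, hlt⟩
  rcases Finset.mem_insert.mp hd with rfl | hd
  · exact lt_irrefl _ hlt
  · exact hcel (ν.up_left_mem hlt.le hcol.ge hd)

lemma prod_cells_eq_of_insert (hcel : cel ∉ ν.cells) (hμ : μ.cells = insert cel ν.cells) :
    ∏ s ∈ μ.cells, armFactor μ s * legFactor μ s =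
      (1 - t) * (1 - q) * ∏ s ∈ ν.cells, armFactor μ s * legFactor μ s := by
  rw [hμ, Finset.prod_insert hcel]
  congr 1
  simp [armFactor, legFactor, arm_eq_zero_of_insert hcel hμ, leg_eq_zero_of_insert hcel hμ]

lemma prod_hook_ratio_eq_row_mul_col (hcel : cel ∉ ν.cells)
    (hμ : μ.cells = insert cel ν.cells) :
    ∏ s ∈ ν.cells, armFactor ν s * legFactor ν s / (armFactor μ s * legFactor μ s) =
      (∏ s ∈ ν.cells.filter (fun s => s.1 = cel.1),
        armFactor ν s * legFactor ν s / (armFactor μ s * legFactor μ s)) *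
      ∏ s ∈ ν.cells.filter (fun s => s.2 = cel.2),
        armFactor ν s * legFactor ν s / (armFactor μ s * legFactor μ s) := by
  have hdisj : Disjoint (ν.cells.filter fun s => s.1 = cel.1)
      (ν.cells.filter fun s => s.2 = cel.2) :=
    Finset.disjoint_left.mpr fun s hrow hcol => hcel <|
      Prod.ext (Finset.mem_filter.mp hrow).2 (Finset.mem_filter.mp hcol).2 ▸
        (Finset.mem_filter.mp hrow).1
  rw [← Finset.prod_union hdisj, ← Finset.filter_or]
  refine (Finset.prod_subset (Finset.filter_subset _ _) fun s hs hs' => ?_).symm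
  obtain ⟨hrow, hcol⟩ : s.1 ≠ cel.1 ∧ s.2 ≠ cel.2 := by simpa [hs] using hs'
  have hsame : armFactor μ s * legFactor μ s = armFactor ν s * legFactor ν s := by
    simp only [armFactor, legFactor, arm_eq_of_ne_row hμ hrow, leg_eq_of_ne_col hμ hcol]
  rw [hsame, div_self (mul_ne_zero (armFactor_ne_zero ν s) (legFactor_ne_zero ν s))]

end AddCell

/-- the relation `d_{μν} = M·(w_ν/w_μ)·c_{μν}` between the `e₁`- and
`e₁^⊥`-Pieri coefficients of the modified Macdonald polynomials. -/
theorem stmt_7 (ν μ : YoungDiagram) (cel : ℕ × ℕ)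
    (hcel : cel ∉ ν.cells) (hμ : μ.cells = insert cel ν.cells)
    (M : K) (hM : M = (1 - t) * (1 - q))
    (wν wμ dmn cmn : K)
    (hwν : wν = ∏ s ∈ ν.cells,
      ((q ^ arm ν s - t ^ (leg ν s + 1)) * (t ^ leg ν s - q ^ (arm ν s + 1))))
    (hwμ : wμ = ∏ s ∈ μ.cells,
      ((q ^ arm μ s - t ^ (leg μ s + 1)) * (t ^ leg μ s - q ^ (arm μ s + 1))))
    (hd : dmn =
      (∏ s ∈ ν.cells.filter (fun s => s.1 = cel.1),
        (q ^ arm ν s - t ^ (leg ν s + 1)) / (q ^ arm μ s - t ^ (leg μ s + 1))) *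
      (∏ s ∈ ν.cells.filter (fun s => s.2 = cel.2),
        (t ^ leg ν s - q ^ (arm ν s + 1)) / (t ^ leg μ s - q ^ (arm μ s + 1))))
    (hc : cmn =
      (∏ s ∈ ν.cells.filter (fun s => s.1 = cel.1),
        (t ^ leg μ s - q ^ (arm μ s + 1)) / (t ^ leg ν s - q ^ (arm ν s + 1))) *
      (∏ s ∈ ν.cells.filter (fun s => s.2 = cel.2),
        (q ^ arm μ s - t ^ (leg μ s + 1)) / (q ^ arm ν s - t ^ (leg ν s + 1)))) :
    dmn = M * (wν / wμ) * cmn := by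
  subst hM hwν hwμ hd hc
  simp only [← armFactor.eq_1, ← legFactor.eq_1]
  have hM : (1 - t) * (1 - q) ≠ 0 := by
    have h1t := q_pow_ne_t_pow (a := 0) (b := 1) (Or.inr one_ne_zero)
    have h1q := q_pow_ne_t_pow (a := 1) (b := 0) (Or.inl one_ne_zero)
    simp only [pow_zero, pow_one] at h1t h1q
    exact mul_ne_zero (sub_ne_zero.mpr h1t) (sub_ne_zero.mpr h1q.symm)
  rw [prod_cells_eq_of_insert hcel hμ, ← mul_div_assoc, mul_div_mul_left _ _ hM,
    ← Finset.prod_div_distrib, prod_hook_ratio_eq_row_mul_col hcel hμ, mul_mul_mul_comm,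
    ← Finset.prod_mul_distrib, ← Finset.prod_mul_distrib]
  congr 1 <;> refine Finset.prod_congr rfl fun s _ => ?_ <;>
    field_simp [armFactor_ne_zero, legFactor_ne_zero]

end
end
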